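/- arXiv:1706.06017 — 2 statements merged into one kernel-verified Lean document; each statement's English description precedes it below -/
import Mathlib

section
/- Let 1 ≤ p ≤ q < ∞ and let X be a p-convex Banach function lattice on a σ-finite measure space with M^(p)(X) = 1 such that the p-concavification X_p admits a strictly positive functional (i.e., there is x* ∈ (X_p)* with ⟨x, x*⟩ > 0 whenever 0 < x ∈ X_p). Then for every regular Borel probability measure ν on B⁺_{(X_p)*} there is a regular Borel probability measure ν̃ on B⁺_{(X_p)*} such that ‖·‖_{p,q,ν̃} is a lattice norm on X (not merely a seminorm) and (1/2) ‖x‖_{p,q,ν} ≤ ‖x‖_{p,q,ν̃} ≤ ‖x‖_X for all x ∈ X. -/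
open MeasureTheory Filter

noncomputable section

section Preamble

variable {Ω : Type} [MeasurableSpace Ω] {μ : Measure Ω}

/-- The a.e.-class of `ω ↦ |f ω| ^ e` (real power). -/
def rpowAbs (e : ℝ) (f : Ω →ₘ[μ] ℝ) : Ω →ₘ[μ] ℝ :=
  AEEqFun.mk (fun ω => |f ω| ^ e)
    (((measurable_abs.comp_aemeasurable f.aestronglyMeasurable.aemeasurable).pow
        aemeasurable_const).aestronglyMeasurable)

/-- The a.e.-class of `ω ↦ (∑ k, |x k ω| ^ p) ^ (1/p)`. -/
def pSum (p : ℝ) {n : ℕ} (x : Fin n → (Ω →ₘ[μ] ℝ)) : Ω →ₘ[μ] ℝ :=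
  AEEqFun.mk (fun ω => (∑ k, |x k ω| ^ p) ^ p⁻¹)
    (((Finset.aemeasurable_fun_sum Finset.univ fun k _ =>
        ((measurable_abs.comp_aemeasurable (x k).aestronglyMeasurable.aemeasurable).pow
          aemeasurable_const)).pow
      aemeasurable_const).aestronglyMeasurable)

/-- A Banach function lattice on a measure space `(Ω, μ)`: an order ideal of `L⁰(μ)`
equipped with a complete lattice norm. -/
structure BFL (Ω : Type) [MeasurableSpace Ω] (μ : Measure Ω) where
  mem : (Ω →ₘ[μ] ℝ) → Prop
  nrm : (Ω →ₘ[μ] ℝ) → ℝ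
  zero_mem : mem 0
  add_mem : ∀ f g, mem f → mem g → mem (f + g)
  smul_mem : ∀ (c : ℝ) f, mem f → mem (c • f)
  ideal : ∀ f g, mem g → |f| ≤ |g| → mem f
  nrm_nonneg : ∀ f, 0 ≤ nrm f
  nrm_eq_zero : ∀ f, mem f → nrm f = 0 → f = 0
  nrm_triangle : ∀ f g, mem f → mem g → nrm (f + g) ≤ nrm f + nrm g
  nrm_smul : ∀ (c : ℝ) f, mem f → nrm (c • f) = |c| * nrm f
  nrm_mono : ∀ f g, mem g → |f| ≤ |g| → nrm f ≤ nrm g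
  complete : ∀ u : ℕ → (Ω →ₘ[μ] ℝ), (∀ n, mem (u n)) →
    (∀ ε : ℝ, 0 < ε → ∃ N, ∀ m ≥ N, ∀ k ≥ N, nrm (u m - u k) < ε) →
    ∃ f, mem f ∧ Tendsto (fun n => nrm (u n - f)) atTop (nhds 0)

/-- `p`-convexity with constant `C`. -/
def BFL.pConvex (X : BFL Ω μ) (p C : ℝ) : Prop :=
  ∀ (n : ℕ) (x : Fin n → (Ω →ₘ[μ] ℝ)), (∀ k, X.mem (x k)) →
    X.mem (pSum p x) ∧ X.nrm (pSum p x) ≤ C * (∑ k, X.nrm (x k) ^ p) ^ p⁻¹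

/-- `p`-concavity with constant `C`. -/
def BFL.pConcave (X : BFL Ω μ) (p C : ℝ) : Prop :=
  ∀ (n : ℕ) (x : Fin n → (Ω →ₘ[μ] ℝ)), (∀ k, X.mem (x k)) →
    (∑ k, X.nrm (x k) ^ p) ^ p⁻¹ ≤ C * X.nrm (pSum p x)

/-- Order continuity of a function norm: decreasing sequences with infimum `0`
have norms tending to `0`. -/
def OrderContOn (mem : (Ω →ₘ[μ] ℝ) → Prop) (nrm : (Ω →ₘ[μ] ℝ) → ℝ) : Prop :=
  ∀ f : ℕ → (Ω →ₘ[μ] ℝ), (∀ n, mem (f n)) → (∀ n, f (n + 1) ≤ f n) → (∀ n, 0 ≤ f n) →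
    (∀ g, (∀ n, g ≤ f n) → g ≤ 0) → Tendsto (fun n => nrm (f n)) atTop (nhds 0)

/-- Order continuity of a Banach function lattice. -/
def BFL.OrderCont (X : BFL Ω μ) : Prop := OrderContOn X.mem X.nrm

/-- The Fatou property. -/
def BFL.Fatou (X : BFL Ω μ) : Prop :=
  ∀ (f : ℕ → (Ω →ₘ[μ] ℝ)) (g : Ω →ₘ[μ] ℝ), (∀ n, X.mem (f n)) → (∀ n, 0 ≤ f n) →
    Monotone f → (∀ n, f n ≤ g) → (∀ h, (∀ n, f n ≤ h) → g ≤ h) →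
    BddAbove (Set.range fun n => X.nrm (f n)) →
    X.mem g ∧ Tendsto (fun n => X.nrm (f n)) atTop (nhds (X.nrm g))

/-- The closed unit ball `B_r^n` of `ℓ_r^n` where `1/r = 1/p - 1/q` (`r = ∞` when `p = q`). -/
def strongBall (p q : ℝ) (n : ℕ) : Set (Fin n → ℝ) :=
  {β | if p = q then ∀ k, |β k| ≤ 1 else ∑ k, |β k| ^ (1 / p - 1 / q)⁻¹ ≤ 1}

/-- `sup_{β ∈ B_r^n} ‖(∑_k |β_k x_k|^p)^{1/p}‖`, where `1/r = 1/p - 1/q`. -/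
def strongSup (nrm : (Ω →ₘ[μ] ℝ) → ℝ) (p q : ℝ) {n : ℕ} (x : Fin n → (Ω →ₘ[μ] ℝ)) : ℝ :=
  ⨆ β : strongBall p q n, nrm (pSum p fun k => β.1 k • x k)

/-- Membership in the `p`-concavification: `f ∈ X_p ↔ |f|^{1/p} ∈ X`. -/
def cMem (mem : (Ω →ₘ[μ] ℝ) → Prop) (p : ℝ) (f : Ω →ₘ[μ] ℝ) : Prop := mem (rpowAbs p⁻¹ f)

/-- The norm of the `p`-concavification: `‖f‖_{X_p} = ‖|f|^{1/p}‖_X ^ p`. -/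
def cNrm (nrm : (Ω →ₘ[μ] ℝ) → ℝ) (p : ℝ) (f : Ω →ₘ[μ] ℝ) : ℝ := nrm (rpowAbs p⁻¹ f) ^ p

/-- The positive part of the closed dual unit ball of a function norm: positive functionals
of norm at most one, as bare functions on `L⁰`. -/
def dualBallPos (mem : (Ω →ₘ[μ] ℝ) → Prop) (nrm : (Ω →ₘ[μ] ℝ) → ℝ) :
    Set ((Ω →ₘ[μ] ℝ) → ℝ) :=
  {φ | (∀ f g, mem f → mem g → φ (f + g) = φ f + φ g) ∧
       (∀ (c : ℝ) f, mem f → φ (c • f) = c * φ f) ∧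
       (∀ f, mem f → 0 ≤ f → 0 ≤ φ f) ∧
       (∀ f, mem f → |φ f| ≤ nrm f)}

/-- The closed dual unit ball of a function norm. -/
def dualBall (mem : (Ω →ₘ[μ] ℝ) → Prop) (nrm : (Ω →ₘ[μ] ℝ) → ℝ) :
    Set ((Ω →ₘ[μ] ℝ) → ℝ) :=
  {φ | (∀ f g, mem f → mem g → φ (f + g) = φ f + φ g) ∧
       (∀ (c : ℝ) f, mem f → φ (c • f) = c * φ f) ∧
       (∀ f, mem f → |φ f| ≤ nrm f)}

/-- The positive part of the dual unit ball, as a type carrying the weak* (pointwise)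
topology and its Borel σ-algebra. -/
def DualPos (mem : (Ω →ₘ[μ] ℝ) → Prop) (nrm : (Ω →ₘ[μ] ℝ) → ℝ) : Type _ :=
  ↥(dualBallPos mem nrm)

instance {mem : (Ω →ₘ[μ] ℝ) → Prop} {nrm : (Ω →ₘ[μ] ℝ) → ℝ} :
    TopologicalSpace (DualPos (μ := μ) mem nrm) :=
  inferInstanceAs (TopologicalSpace ↥(dualBallPos mem nrm))

instance {mem : (Ω →ₘ[μ] ℝ) → Prop} {nrm : (Ω →ₘ[μ] ℝ) → ℝ} :
    MeasurableSpace (DualPos (μ := μ) mem nrm) := borel _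

instance {mem : (Ω →ₘ[μ] ℝ) → Prop} {nrm : (Ω →ₘ[μ] ℝ) → ℝ} :
    BorelSpace (DualPos (μ := μ) mem nrm) := ⟨rfl⟩

/-- Evaluation of a functional in the dual ball. -/
def DualPos.app {mem : (Ω →ₘ[μ] ℝ) → Prop} {nrm : (Ω →ₘ[μ] ℝ) → ℝ}
    (φ : DualPos (μ := μ) mem nrm) (f : Ω →ₘ[μ] ℝ) : ℝ :=
  Subtype.val φ f

/-- The seminorm `‖f‖_{p,q,ν} = (∫ ⟨|f|^p, φ⟩^{q/p} dν(φ))^{1/q}`. -/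
def pqNrm {mem : (Ω →ₘ[μ] ℝ) → Prop} {nrm : (Ω →ₘ[μ] ℝ) → ℝ} (p q : ℝ)
    (ν : Measure (DualPos (μ := μ) mem nrm)) (f : Ω →ₘ[μ] ℝ) : ℝ :=
  (∫ φ, (DualPos.app φ (rpowAbs p f)) ^ (q / p) ∂ν) ^ q⁻¹

/-- Membership in the Köthe dual of a function space. -/
def kMem (mem : (Ω →ₘ[μ] ℝ) → Prop) (h : Ω →ₘ[μ] ℝ) : Prop :=
  ∀ f, mem f → ∫⁻ ω, ENNReal.ofReal |f ω * h ω| ∂μ < ⊤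

/-- The Köthe dual norm. -/
def kNrm (mem : (Ω →ₘ[μ] ℝ) → Prop) (nrm : (Ω →ₘ[μ] ℝ) → ℝ) (h : Ω →ₘ[μ] ℝ) : ℝ :=
  ⨆ f : {f : Ω →ₘ[μ] ℝ // mem f ∧ nrm f ≤ 1}, ∫ ω, |f.1 ω * h ω| ∂μ

/-- The positive part of the closed unit ball of the Köthe dual. -/
def kothePosBall (mem : (Ω →ₘ[μ] ℝ) → Prop) (nrm : (Ω →ₘ[μ] ℝ) → ℝ) :
    Set (Ω →ₘ[μ] ℝ) :=
  {h | 0 ≤ h ∧ ∀ f, mem f → ∫⁻ ω, ENNReal.ofReal |f ω * h ω| ∂μ ≤ ENNReal.ofReal (nrm f)}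

/-- The positive part of the Köthe-dual unit ball, as a type carrying the topology
`σ(X', X)` of pointwise convergence of the pairings, and its Borel σ-algebra. -/
def KBallPos (mem : (Ω →ₘ[μ] ℝ) → Prop) (nrm : (Ω →ₘ[μ] ℝ) → ℝ) : Type _ :=
  ↥(kothePosBall (μ := μ) mem nrm)

/-- The underlying function of an element of the Köthe-dual ball. -/
def KBallPos.fn {mem : (Ω →ₘ[μ] ℝ) → Prop} {nrm : (Ω →ₘ[μ] ℝ) → ℝ}
    (h : KBallPos (μ := μ) mem nrm) : Ω →ₘ[μ] ℝ :=
  Subtype.val h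

instance {mem : (Ω →ₘ[μ] ℝ) → Prop} {nrm : (Ω →ₘ[μ] ℝ) → ℝ} :
    TopologicalSpace (KBallPos (μ := μ) mem nrm) :=
  TopologicalSpace.induced
    (fun h => fun f : (Ω →ₘ[μ] ℝ) => ∫ ω, f ω * (KBallPos.fn h) ω ∂μ) Pi.topologicalSpace

instance {mem : (Ω →ₘ[μ] ℝ) → Prop} {nrm : (Ω →ₘ[μ] ℝ) → ℝ} :
    MeasurableSpace (KBallPos (μ := μ) mem nrm) := borel _

/-- Membership in the space `S^q_{X_p}(ξ)`. -/
def sMem {mem : (Ω →ₘ[μ] ℝ) → Prop} {nrm : (Ω →ₘ[μ] ℝ) → ℝ} (p q : ℝ)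
    (ξ : Measure (KBallPos (μ := μ) mem nrm)) (f : Ω →ₘ[μ] ℝ) : Prop :=
  (∫⁻ h, (∫⁻ ω, ENNReal.ofReal (|f ω| ^ p * (KBallPos.fn h) ω) ∂μ) ^ (q / p) ∂ξ) < ⊤

/-- The norm of the space `S^q_{X_p}(ξ)`:
`‖f‖ = (∫ (∫ |f|^p h dμ)^{q/p} dξ(h))^{1/q}`. -/
def sNrm {mem : (Ω →ₘ[μ] ℝ) → Prop} {nrm : (Ω →ₘ[μ] ℝ) → ℝ} (p q : ℝ)
    (ξ : Measure (KBallPos (μ := μ) mem nrm)) (f : Ω →ₘ[μ] ℝ) : ℝ :=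
  ((∫⁻ h, (∫⁻ ω, ENNReal.ofReal (|f ω| ^ p * (KBallPos.fn h) ω) ∂μ) ^ (q / p) ∂ξ) ^ q⁻¹).toReal

end Preamble

section Operators

/-- A bounded linear operator between Banach function lattices, as a map of `L⁰` spaces. -/
def IsBddOp {Ω₁ Ω₂ : Type} [MeasurableSpace Ω₁] [MeasurableSpace Ω₂]
    {μ₁ : Measure Ω₁} {μ₂ : Measure Ω₂} (X : BFL Ω₁ μ₁) (Y : BFL Ω₂ μ₂)
    (T : (Ω₁ →ₘ[μ₁] ℝ) → (Ω₂ →ₘ[μ₂] ℝ)) : Prop :=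
  (∀ f, X.mem f → Y.mem (T f)) ∧
  (∀ f g, X.mem f → X.mem g → T (f + g) = T f + T g) ∧
  (∀ (c : ℝ) f, X.mem f → T (c • f) = c • T f) ∧
  ∃ K, ∀ f, X.mem f → Y.nrm (T f) ≤ K * X.nrm f

/-- A bounded linear operator from a Banach function lattice into a normed space. -/
def IsBddOpE {Ω : Type} [MeasurableSpace Ω] {μ : Measure Ω} (X : BFL Ω μ) {E : Type}
    [NormedAddCommGroup E] [NormedSpace ℝ E] (T : (Ω →ₘ[μ] ℝ) → E) : Prop :=
  (∀ f g, X.mem f → X.mem g → T (f + g) = T f + T g) ∧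
  (∀ (c : ℝ) f, X.mem f → T (c • f) = c • T f) ∧
  ∃ K, ∀ f, X.mem f → ‖T f‖ ≤ K * X.nrm f

/-- `T : X → Y` is `(p₁,p₂)`-strongly `(q₁,q₂)`-concave with constant `C`:
`|∑ₖ ⟨T xₖ, yₖ'⟩| ≤ C · sup_{α ∈ B_{r₁}} ‖(∑ |αₖ xₖ|^{p₁})^{1/p₁}‖_X ·
sup_{β ∈ B_{r₂}} ‖(∑ |βₖ yₖ'|^{p₂})^{1/p₂}‖_{Y'}` for all finite sequences in `X` and `Y'`. -/
def StrongPair {Ω₁ Ω₂ : Type} [MeasurableSpace Ω₁] [MeasurableSpace Ω₂]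
    {μ₁ : Measure Ω₁} {μ₂ : Measure Ω₂} (X : BFL Ω₁ μ₁) (Y : BFL Ω₂ μ₂)
    (p₁ q₁ p₂ q₂ : ℝ) (T : (Ω₁ →ₘ[μ₁] ℝ) → (Ω₂ →ₘ[μ₂] ℝ)) (C : ℝ) : Prop :=
  ∀ (n : ℕ) (x : Fin n → (Ω₁ →ₘ[μ₁] ℝ)) (y : Fin n → (Ω₂ →ₘ[μ₂] ℝ)),
    (∀ k, X.mem (x k)) → (∀ k, kMem Y.mem (y k)) →
    |∑ k, ∫ ω, (T (x k)) ω * (y k) ω ∂μ₂| ≤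
      C * (strongSup X.nrm p₁ q₁ x * strongSup (kNrm Y.mem Y.nrm) p₂ q₂ y)

/-- A bounded `m`-linear operator on a product of Banach function lattices. -/
def MultilinearBdd {m : ℕ} {Ω : Fin m → Type} [∀ j, MeasurableSpace (Ω j)]
    {μ : ∀ j, Measure (Ω j)} (X : ∀ j, BFL (Ω j) (μ j))
    {Y : Type} [NormedAddCommGroup Y] [NormedSpace ℝ Y]
    (T : (∀ j, (Ω j →ₘ[μ j] ℝ)) → Y) : Prop :=
  (∀ x, (∀ j, (X j).mem (x j)) → ∀ j f g, (X j).mem f → (X j).mem g →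
      T (Function.update x j (f + g)) = T (Function.update x j f) + T (Function.update x j g)) ∧
  (∀ x, (∀ j, (X j).mem (x j)) → ∀ j (c : ℝ) f, (X j).mem f →
      T (Function.update x j (c • f)) = c • T (Function.update x j f)) ∧
  ∃ K, ∀ x, (∀ j, (X j).mem (x j)) → ‖T x‖ ≤ K * ∏ j, (X j).nrm (x j)

/-- An `m`-linear operator is `(p₁,…,p_m)`-strongly `(q₁,…,q_m)`-concave with constant `C`,
where `1/q = ∑ⱼ 1/qⱼ`:
`(∑ₖ ‖T(x¹ₖ,…,xᵐₖ)‖^q)^{1/q} ≤ C ∏ⱼ sup_{βʲ ∈ B_{rⱼ}} ‖(∑ₖ |βʲₖ xʲₖ|^{pⱼ})^{1/pⱼ}‖_{Xⱼ}`. -/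
def StronglyConcaveML {m : ℕ} {Ω : Fin m → Type} [∀ j, MeasurableSpace (Ω j)]
    {μ : ∀ j, Measure (Ω j)} (X : ∀ j, BFL (Ω j) (μ j)) (p q : Fin m → ℝ)
    {Y : Type} [NormedAddCommGroup Y]
    (T : (∀ j, (Ω j →ₘ[μ j] ℝ)) → Y) (C : ℝ) : Prop :=
  ∀ (n : ℕ) (x : ∀ j, Fin n → (Ω j →ₘ[μ j] ℝ)), (∀ j k, (X j).mem (x j k)) →
    (∑ k, ‖T fun j => x j k‖ ^ (∑ j, (q j)⁻¹)⁻¹) ^ (∑ j, (q j)⁻¹) ≤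
      C * ∏ j, strongSup (X j).nrm (p j) (q j) (x j)

/-- A Banach space, packaged as a structure. -/
structure BanachSpaceStruct where
  E : Type
  grp : NormedAddCommGroup E
  mod : NormedSpace ℝ E
  cpl : CompleteSpace E

attribute [instance] BanachSpaceStruct.grp BanachSpaceStruct.mod BanachSpaceStruct.cpl

end Operators

/-! Put `ν̃ = ½ ν + ½ δ_{φ₀}` for a strictly positive `φ₀ ∈ B⁺_{(X_p)*}`. The `q`-th power of
`‖x‖_{p,q,ν}` is affine in `ν`, so `‖x‖_{p,q,ν̃}^q = ½ ‖x‖_{p,q,ν}^q + ½ ⟨|x|^p, φ₀⟩^{q/p}`.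
The first summand dominates `(½ ‖x‖_{p,q,ν})^q` because `q ≥ 1`, and the second vanishes only for
`x = 0`. The upper bound holds for every probability measure, since
`⟨|x|^p, x*⟩ ≤ ‖|x|^p‖_{X_p} = ‖x‖_X^p` on the dual ball. -/

namespace MeasureTheory.Measure

variable {α : Type*} [MeasurableSpace α] [TopologicalSpace α]

instance OuterRegular.add (μ ν : Measure α) [OuterRegular μ] [OuterRegular ν] :
    OuterRegular (μ + ν) where
  outerRegular A _ r hr := by
    obtain ⟨r₁, hr₁, r₂, hr₂, hr⟩ := ENNReal.exists_add_lt_of_add_lt hr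
    obtain ⟨U₁, hAU₁, hU₁, hμU₁⟩ := A.exists_isOpen_lt_of_lt r₁ hr₁
    obtain ⟨U₂, hAU₂, hU₂, hνU₂⟩ := A.exists_isOpen_lt_of_lt r₂ hr₂
    refine ⟨U₁ ∩ U₂, Set.subset_inter hAU₁ hAU₂, hU₁.inter hU₂, ?_⟩
    calc (μ + ν) (U₁ ∩ U₂) ≤ μ U₁ + ν U₂ :=
          add_le_add (measure_mono Set.inter_subset_left) (measure_mono Set.inter_subset_right)
      _ < r₁ + r₂ := ENNReal.add_lt_add hμU₁ hνU₂
      _ < r := hr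

instance Regular.add (μ ν : Measure α) [Regular μ] [Regular ν] : Regular (μ + ν) where
  lt_top_of_isCompact _ hK :=
    ENNReal.add_lt_top.mpr ⟨hK.measure_lt_top, hK.measure_lt_top⟩
  innerRegular U hU r hr := by
    rcases eq_or_ne (μ U) 0 with hμ | hμ
    · obtain ⟨K, hKU, hK, hνK⟩ := hU.exists_lt_isCompact (μ := ν) (by simpa [hμ] using hr)
      exact ⟨K, hKU, hK, hνK.trans_le le_add_self⟩
    rcases eq_or_ne (ν U) 0 with hν | hν
    · obtain ⟨K, hKU, hK, hμK⟩ := hU.exists_lt_isCompact (μ := μ) (by simpa [hν] using hr)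
      exact ⟨K, hKU, hK, hμK.trans_le le_self_add⟩
    obtain ⟨r₁, hr₁, r₂, hr₂, hr⟩ := ENNReal.exists_lt_add_of_lt_add hr hμ hν
    obtain ⟨K₁, hK₁U, hK₁, hμK₁⟩ := hU.exists_lt_isCompact hr₁
    obtain ⟨K₂, hK₂U, hK₂, hνK₂⟩ := hU.exists_lt_isCompact hr₂
    refine ⟨K₁ ∪ K₂, Set.union_subset hK₁U hK₂U, hK₁.union hK₂, ?_⟩
    calc r < r₁ + r₂ := hr
      _ ≤ μ K₁ + ν K₂ := add_le_add hμK₁.le hνK₂.le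
      _ ≤ (μ + ν) (K₁ ∪ K₂) :=
          add_le_add (measure_mono Set.subset_union_left) (measure_mono Set.subset_union_right)

instance regular_dirac [T1Space α] [OpensMeasurableSpace α] (a : α) : Regular (dirac a) where
  lt_top_of_isCompact _ _ := measure_lt_top _ _
  outerRegular A hA r hr := by
    by_cases ha : a ∈ A
    · exact ⟨Set.univ, Set.subset_univ A, isOpen_univ, by simpa [ha, hA] using hr⟩
    · refine ⟨{a}ᶜ, Set.subset_compl_singleton_iff.mpr ha, isOpen_compl_singleton, ?_⟩
      simpa [ha, hA] using hr
  innerRegular U hU r hr := by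
    have ha : a ∈ U := by
      by_contra ha
      simp [ha, hU.measurableSet] at hr
    exact ⟨{a}, Set.singleton_subset_iff.mpr ha, isCompact_singleton, by
      simpa [ha, hU.measurableSet] using hr⟩

end MeasureTheory.Measure

section ConcavificationDual

variable {Ω : Type} [MeasurableSpace Ω] {μ : Measure Ω}

lemma coeFn_rpowAbs (e : ℝ) (f : Ω →ₘ[μ] ℝ) : rpowAbs e f =ᵐ[μ] fun ω => |f ω| ^ e :=
  AEEqFun.coeFn_mk _ _

lemma rpowAbs_nonneg (e : ℝ) (f : Ω →ₘ[μ] ℝ) : 0 ≤ rpowAbs e f := by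
  rw [← AEEqFun.coeFn_le]
  filter_upwards [AEEqFun.coeFn_zero (μ := μ) (β := ℝ), coeFn_rpowAbs e f] with ω h0 hf
  rw [h0, hf]
  positivity

lemma rpowAbs_inv_rpowAbs {p : ℝ} (hp : p ≠ 0) (f : Ω →ₘ[μ] ℝ) :
    rpowAbs p⁻¹ (rpowAbs p f) = |f| := by
  refine AEEqFun.ext ?_
  filter_upwards [coeFn_rpowAbs p⁻¹ (rpowAbs p f), coeFn_rpowAbs p f, AEEqFun.coeFn_abs f]
    with ω h h' habs
  rw [h, h', habs, abs_of_nonneg (by positivity), ← Real.rpow_mul (abs_nonneg _),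
    mul_inv_cancel₀ hp, Real.rpow_one]

lemma eq_zero_of_rpowAbs_eq_zero {p : ℝ} (hp : p ≠ 0) {f : Ω →ₘ[μ] ℝ}
    (hf : rpowAbs p f = 0) : f = 0 := by
  refine AEEqFun.ext ?_
  filter_upwards [coeFn_rpowAbs p f, AEEqFun.coeFn_zero (μ := μ) (β := ℝ)] with ω h h0
  rw [hf, h0, Pi.zero_apply] at h
  rw [h0, Pi.zero_apply, ← abs_eq_zero, ← Real.rpow_eq_zero (abs_nonneg _) hp, ← h]

protected lemma MeasureTheory.AEEqFun.abs_abs (f : Ω →ₘ[μ] ℝ) : |(|f|)| = |f| :=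
  AEEqFun.ext <| by
    filter_upwards [AEEqFun.coeFn_abs |f|, AEEqFun.coeFn_abs f] with ω h h'
    rw [h, h', abs_abs]

lemma BFL.mem_abs (X : BFL Ω μ) {f : Ω →ₘ[μ] ℝ} (hf : X.mem f) : X.mem |f| :=
  X.ideal |f| f hf (AEEqFun.abs_abs f).le

lemma BFL.nrm_abs (X : BFL Ω μ) {f : Ω →ₘ[μ] ℝ} (hf : X.mem f) : X.nrm |f| = X.nrm f :=
  (X.nrm_mono |f| f hf (AEEqFun.abs_abs f).le).antisymm
    (X.nrm_mono f |f| (X.mem_abs hf) (AEEqFun.abs_abs f).ge)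

lemma BFL.cMem_rpowAbs (X : BFL Ω μ) {p : ℝ} (hp : p ≠ 0) {f : Ω →ₘ[μ] ℝ} (hf : X.mem f) :
    cMem X.mem p (rpowAbs p f) := by
  rw [cMem, rpowAbs_inv_rpowAbs hp]
  exact X.mem_abs hf

lemma BFL.cNrm_rpowAbs (X : BFL Ω μ) {p : ℝ} (hp : p ≠ 0) {f : Ω →ₘ[μ] ℝ} (hf : X.mem f) :
    cNrm X.nrm p (rpowAbs p f) = X.nrm f ^ p := by
  rw [cNrm, rpowAbs_inv_rpowAbs hp, X.nrm_abs hf]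

namespace DualPos

variable {mem : (Ω →ₘ[μ] ℝ) → Prop} {nrm : (Ω →ₘ[μ] ℝ) → ℝ}

instance : T2Space (DualPos mem nrm) := inferInstanceAs (T2Space ↥(dualBallPos mem nrm))

lemma continuous_app (g : Ω →ₘ[μ] ℝ) : Continuous fun φ : DualPos mem nrm => φ.app g :=
  (continuous_apply g).comp continuous_subtype_val

lemma app_nonneg (φ : DualPos mem nrm) {g : Ω →ₘ[μ] ℝ} (hg : mem g) (h0 : 0 ≤ g) :
    0 ≤ φ.app g :=
  φ.2.2.2.1 g hg h0

lemma app_le (φ : DualPos mem nrm) {g : Ω →ₘ[μ] ℝ} (hg : mem g) : φ.app g ≤ nrm g :=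
  (le_abs_self _).trans (φ.2.2.2.2 g hg)

end DualPos

end ConcavificationDual

section MixedNorm

open scoped NNReal

variable {Ω : Type} [MeasurableSpace Ω] {μ : Measure Ω} (X : BFL Ω μ) {p q : ℝ}
  {f : Ω →ₘ[μ] ℝ}

lemma app_rpowAbs_nonneg (hp : p ≠ 0) (hf : X.mem f)
    (φ : DualPos (cMem X.mem p) (cNrm X.nrm p)) : 0 ≤ φ.app (rpowAbs p f) :=
  φ.app_nonneg (X.cMem_rpowAbs hp hf) (rpowAbs_nonneg p f)

lemma app_rpowAbs_rpow_le (hp : 0 < p) (hq : 0 ≤ q) (hf : X.mem f)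
    (φ : DualPos (cMem X.mem p) (cNrm X.nrm p)) :
    φ.app (rpowAbs p f) ^ (q / p) ≤ X.nrm f ^ q := by
  have hle : φ.app (rpowAbs p f) ≤ X.nrm f ^ p :=
    X.cNrm_rpowAbs hp.ne' hf ▸ φ.app_le (X.cMem_rpowAbs hp.ne' hf)
  calc φ.app (rpowAbs p f) ^ (q / p) ≤ (X.nrm f ^ p) ^ (q / p) :=
        Real.rpow_le_rpow (app_rpowAbs_nonneg X hp.ne' hf φ) hle (div_nonneg hq hp.le)
    _ = X.nrm f ^ q := by rw [← Real.rpow_mul (X.nrm_nonneg f), mul_div_cancel₀ q hp.ne']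

lemma integrable_app_rpowAbs_rpow (hp : 0 < p) (hq : 0 ≤ q) (hf : X.mem f)
    (ν : Measure (DualPos (cMem X.mem p) (cNrm X.nrm p))) [IsFiniteMeasure ν] :
    Integrable (fun φ => φ.app (rpowAbs p f) ^ (q / p)) ν := by
  refine Integrable.of_bound ?_ (X.nrm f ^ q) (ae_of_all _ fun φ => ?_)
  · exact ((DualPos.continuous_app _).rpow_const fun _ =>
      Or.inr (div_nonneg hq hp.le)).aestronglyMeasurable
  · rw [Real.norm_of_nonneg (Real.rpow_nonneg (app_rpowAbs_nonneg X hp.ne' hf φ) _)]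
    exact app_rpowAbs_rpow_le X hp hq hf φ

lemma pqNrm_nonneg (hp : p ≠ 0) (hf : X.mem f)
    (ν : Measure (DualPos (cMem X.mem p) (cNrm X.nrm p))) : 0 ≤ pqNrm p q ν f :=
  Real.rpow_nonneg (integral_nonneg fun φ =>
    Real.rpow_nonneg (app_rpowAbs_nonneg X hp hf φ) _) _

lemma pqNrm_rpow (hp : p ≠ 0) (hq : q ≠ 0) (hf : X.mem f)
    (ν : Measure (DualPos (cMem X.mem p) (cNrm X.nrm p))) :
    pqNrm p q ν f ^ q = ∫ φ, φ.app (rpowAbs p f) ^ (q / p) ∂ν :=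
  Real.rpow_inv_rpow (integral_nonneg fun φ =>
    Real.rpow_nonneg (app_rpowAbs_nonneg X hp hf φ) _) hq

lemma pqNrm_le_nrm (hp : 0 < p) (hq : 0 < q) (hf : X.mem f)
    (ν : Measure (DualPos (cMem X.mem p) (cNrm X.nrm p))) [IsProbabilityMeasure ν] :
    pqNrm p q ν f ≤ X.nrm f := by
  rw [← Real.rpow_le_rpow_iff (pqNrm_nonneg X hp.ne' hf ν) (X.nrm_nonneg f) hq,
    pqNrm_rpow X hp.ne' hq.ne' hf]
  calc ∫ φ, φ.app (rpowAbs p f) ^ (q / p) ∂ν ≤ ∫ _, X.nrm f ^ q ∂ν :=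
        integral_mono (integrable_app_rpowAbs_rpow X hp hq.le hf ν) (integrable_const _)
          (app_rpowAbs_rpow_le X hp hq.le hf)
    _ = X.nrm f ^ q := by simp

lemma pqNrm_dirac (hp : 0 < p) (hq : 0 < q) (hf : X.mem f)
    (Φ : DualPos (cMem X.mem p) (cNrm X.nrm p)) :
    pqNrm p q (Measure.dirac Φ) f = Φ.app (rpowAbs p f) ^ p⁻¹ := by
  rw [pqNrm, integral_dirac, ← Real.rpow_mul (app_rpowAbs_nonneg X hp.ne' hf Φ)]
  congr 1
  field_simp

lemma pqNrm_rpow_add_measure (hp : 0 < p) (hq : 0 < q) (hf : X.mem f)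
    (ν₁ ν₂ : Measure (DualPos (cMem X.mem p) (cNrm X.nrm p))) [IsFiniteMeasure ν₁]
    [IsFiniteMeasure ν₂] (a b : ℝ≥0) :
    pqNrm p q (a • ν₁ + b • ν₂) f ^ q = a * pqNrm p q ν₁ f ^ q + b * pqNrm p q ν₂ f ^ q := by
  simp only [pqNrm_rpow X hp.ne' hq.ne' hf]
  rw [integral_add_measure ((integrable_app_rpowAbs_rpow X hp hq.le hf ν₁).smul_measure_nnreal)
    ((integrable_app_rpowAbs_rpow X hp hq.le hf ν₂).smul_measure_nnreal),
    integral_smul_nnreal_measure, integral_smul_nnreal_measure]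
  rfl

lemma mul_pqNrm_le_pqNrm_add_measure (hp : 0 < p) (hq : 1 ≤ q) (hf : X.mem f)
    (ν₁ ν₂ : Measure (DualPos (cMem X.mem p) (cNrm X.nrm p))) [IsFiniteMeasure ν₁]
    [IsFiniteMeasure ν₂] {a : ℝ≥0} (ha : a ≤ 1) (b : ℝ≥0) :
    a * pqNrm p q ν₁ f ≤ pqNrm p q (a • ν₁ + b • ν₂) f := by
  have hq0 : 0 < q := zero_lt_one.trans_le hq
  have hN₁ := pqNrm_nonneg (q := q) X hp.ne' hf ν₁
  rw [← Real.rpow_le_rpow_iff (by positivity) (pqNrm_nonneg X hp.ne' hf _) hq0,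
    pqNrm_rpow_add_measure X hp hq0 hf, Real.mul_rpow a.coe_nonneg hN₁]
  calc (a : ℝ) ^ q * pqNrm p q ν₁ f ^ q ≤ a * pqNrm p q ν₁ f ^ q := by
        gcongr
        exact Real.rpow_le_self_of_le_one a.coe_nonneg (by exact_mod_cast ha) hq
    _ ≤ a * pqNrm p q ν₁ f ^ q + b * pqNrm p q ν₂ f ^ q :=
        le_add_of_nonneg_right
          (mul_nonneg b.coe_nonneg (Real.rpow_nonneg (pqNrm_nonneg X hp.ne' hf ν₂) q))

lemma pqNrm_eq_zero_of_add_measure (hp : 0 < p) (hq : 0 < q) (hf : X.mem f)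
    (ν₁ ν₂ : Measure (DualPos (cMem X.mem p) (cNrm X.nrm p))) [IsFiniteMeasure ν₁]
    [IsFiniteMeasure ν₂] (a : ℝ≥0) {b : ℝ≥0} (hb : b ≠ 0)
    (h : pqNrm p q (a • ν₁ + b • ν₂) f = 0) : pqNrm p q ν₂ f = 0 := by
  have hsum := pqNrm_rpow_add_measure X hp hq hf ν₁ ν₂ a b
  rw [h, Real.zero_rpow hq.ne'] at hsum
  have h₁ : 0 ≤ (a : ℝ) * pqNrm p q ν₁ f ^ q :=
    mul_nonneg a.coe_nonneg (Real.rpow_nonneg (pqNrm_nonneg X hp.ne' hf ν₁) q)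
  have h₂ : 0 ≤ (b : ℝ) * pqNrm p q ν₂ f ^ q :=
    mul_nonneg b.coe_nonneg (Real.rpow_nonneg (pqNrm_nonneg X hp.ne' hf ν₂) q)
  have hb₂ : (b : ℝ) * pqNrm p q ν₂ f ^ q = 0 := ((add_eq_zero_iff_of_nonneg h₁ h₂).mp hsum.symm).2
  have h₂q : pqNrm p q ν₂ f ^ q = 0 := (mul_eq_zero.mp hb₂).resolve_left (by exact_mod_cast hb)
  exact (Real.rpow_eq_zero (pqNrm_nonneg X hp.ne' hf ν₂) hq.ne').mp h₂q

end MixedNorm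

open scoped NNReal in
theorem statement4_general {Ω : Type} [MeasurableSpace Ω] (μ : Measure Ω)
    (X : BFL Ω μ) (p q : ℝ) (hp : 1 ≤ p) (hpq : p ≤ q)
    (hstrict : ∃ φ₀ ∈ dualBallPos (μ := μ) (cMem X.mem p) (cNrm X.nrm p),
      ∀ f, cMem X.mem p f → 0 ≤ f → f ≠ 0 → 0 < φ₀ f)
    (ν : Measure (DualPos (cMem X.mem p) (cNrm X.nrm p)))
    (hprob : IsProbabilityMeasure ν) (hreg : ν.Regular) :
    ∃ ν' : Measure (DualPos (cMem X.mem p) (cNrm X.nrm p)),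
      IsProbabilityMeasure ν' ∧ ν'.Regular ∧
      (∀ f, X.mem f → pqNrm p q ν' f = 0 → f = 0) ∧
      ∀ f, X.mem f →
        (1 / 2) * pqNrm p q ν f ≤ pqNrm p q ν' f ∧ pqNrm p q ν' f ≤ X.nrm f := by
  have := hprob
  have := hreg
  obtain ⟨φ₀, hφ₀, hφ₀_pos⟩ := hstrict
  have hp0 : 0 < p := zero_lt_one.trans_le hp
  have hq : 1 ≤ q := hp.trans hpq
  have hq0 : 0 < q := zero_lt_one.trans_le hq
  let Φ : DualPos (cMem X.mem p) (cNrm X.nrm p) := ⟨φ₀, hφ₀⟩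
  let ν' := (2⁻¹ : ℝ≥0) • ν + (2⁻¹ : ℝ≥0) • Measure.dirac Φ
  have hν' : IsProbabilityMeasure ν' := ⟨by simp [ν', ENNReal.inv_two_add_inv_two]⟩
  refine ⟨ν', hν', inferInstance, fun f hf hf0 => ?_,
    fun f hf => ⟨?_, pqNrm_le_nrm X hp0 hq0 hf ν'⟩⟩
  · by_contra hne
    have hΦf : Φ.app (rpowAbs p f) = 0 := by
      have := pqNrm_eq_zero_of_add_measure X hp0 hq0 hf ν (Measure.dirac Φ) 2⁻¹ (by norm_num) hf0
      rwa [pqNrm_dirac X hp0 hq0 hf, Real.rpow_eq_zero (app_rpowAbs_nonneg X hp0.ne' hf Φ)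
        (inv_ne_zero hp0.ne')] at this
    exact (hφ₀_pos _ (X.cMem_rpowAbs hp0.ne' hf) (rpowAbs_nonneg p f)
      (mt (eq_zero_of_rpowAbs_eq_zero hp0.ne') hne)).ne' hΦf
  · simpa using mul_pqNrm_le_pqNrm_add_measure X hp0 hq hf ν (Measure.dirac Φ) (a := 2⁻¹)
      (by norm_num) 2⁻¹

/-- Lemma `S-space` (i): if the `p`-concavification of a `p`-convex Banach
function lattice `X` admits a strictly positive functional, then every regular Borel
probability measure `ν` on `B⁺_{(X_p)*}` can be replaced by one, `ν̃`, for which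
`‖·‖_{p,q,ν̃}` is a norm on `X` (not merely a seminorm), with
`(1/2)‖x‖_{p,q,ν} ≤ ‖x‖_{p,q,ν̃} ≤ ‖x‖_X` for all `x ∈ X`. -/
theorem statement4 {Ω : Type} [MeasurableSpace Ω] (μ : Measure Ω) [SigmaFinite μ]
    (X : BFL Ω μ) (p q : ℝ) (hp : 1 ≤ p) (hpq : p ≤ q) (hconv : X.pConvex p 1)
    (hstrict : ∃ φ₀ ∈ dualBallPos (μ := μ) (cMem X.mem p) (cNrm X.nrm p),
      ∀ f, cMem X.mem p f → 0 ≤ f → f ≠ 0 → 0 < φ₀ f)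
    (ν : Measure (DualPos (cMem X.mem p) (cNrm X.nrm p)))
    (hprob : IsProbabilityMeasure ν) (hreg : ν.Regular) :
    ∃ ν' : Measure (DualPos (cMem X.mem p) (cNrm X.nrm p)),
      IsProbabilityMeasure ν' ∧ ν'.Regular ∧
      (∀ f, X.mem f → pqNrm p q ν' f = 0 → f = 0) ∧
      ∀ f, X.mem f →
        (1 / 2) * pqNrm p q ν f ≤ pqNrm p q ν' f ∧ pqNrm p q ν' f ≤ X.nrm f :=
  statement4_general μ X p q hp hpq hstrict ν hprob hreg

end
end

section
/- Let 1 ≤ p_1 < q < ∞, 1 ≤ p_2 < q' (1/q + 1/q' = 1), and let r_1, r_2 be given by 1/r_1 = 1/p_1 − 1/q and 1/r_2 = 1/p_2 − 1/q'. Let X be a p_1-convex Banach function lattice and Y an order continuous p_2'-concave Banach function lattice with the Fatou property (1/p_2 + 1/p_2' = 1), both on σ-finite measure spaces, and let T : X → Y be a bounded linear operator. If there exists C > 0 such that for every finite sequence (x_k)_{k=1}^n in X, inf_{(α_k) ∈ B_{r_2}^n, α_k ≠ 0} ‖ ( ∑_{k=1}^n |T(x_k)/α_k|^{p_2'} )^{1/p_2'}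 ‖_Y ≤ C sup_{(β_k) ∈ B_{r_1}^n} ‖ ( ∑_{k=1}^n |β_k x_k|^{p_1} )^{1/p_1} ‖_X, then T is (p_1,p_2)-strongly (q,q')-concave. -/
open MeasureTheory Filter

noncomputable section

/-!
For any `α ∈ B_{r₂}` with nonzero entries, the pointwise Hölder inequality with the conjugate
exponents `p₂'` and `p₂` gives
`∑ₖ |T xₖ · yₖ'| ≤ (∑ₖ |T xₖ / αₖ|^{p₂'})^{1/p₂'} · (∑ₖ |αₖ yₖ'|^{p₂})^{1/p₂}`.
Integrating and using `∫ |f g| ≤ ‖f‖_Y ‖g‖_{Y'}` bounds `|∑ₖ ⟨T xₖ, yₖ'⟩|` by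
`‖(∑ₖ |T xₖ / αₖ|^{p₂'})^{1/p₂'}‖_Y · sup_{β ∈ B_{r₂}} ‖(∑ₖ |βₖ yₖ'|^{p₂})^{1/p₂}‖_{Y'}`;
the infimum over `α` of the first factor is at most
`C sup_{β ∈ B_{r₁}} ‖(∑ₖ |βₖ xₖ|^{p₁})^{1/p₁}‖_X` by hypothesis. That the Köthe-dual norm is finite on `Y'` follows from a gliding hump argument
which needs only the completeness of `Y`.
-/

open Topology

lemma rpow_inv_sum_rpow_le_sum {ι : Type*} (s : Finset ι) {p : ℝ} (hp : 1 ≤ p) {a : ι → ℝ}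
    (ha : ∀ i ∈ s, 0 ≤ a i) : (∑ i ∈ s, a i ^ p) ^ p⁻¹ ≤ ∑ i ∈ s, a i := by
  have hS : 0 ≤ ∑ i ∈ s, a i := Finset.sum_nonneg ha
  have hp' : 1 + (p - 1) ≠ 0 := by rw [add_sub_cancel]; positivity
  rw [Real.rpow_inv_le_iff_of_pos (Finset.sum_nonneg fun i hi => Real.rpow_nonneg (ha i hi) p) hS
    (by positivity)]
  calc ∑ i ∈ s, a i ^ p = ∑ i ∈ s, a i * a i ^ (p - 1) := Finset.sum_congr rfl fun i hi => by
        rw [← Real.rpow_one_add' (ha i hi) hp', add_sub_cancel]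
    _ ≤ ∑ i ∈ s, a i * (∑ j ∈ s, a j) ^ (p - 1) := Finset.sum_le_sum fun i hi =>
        mul_le_mul_of_nonneg_left
          (Real.rpow_le_rpow (ha i hi) (Finset.single_le_sum ha hi) (by linarith)) (ha i hi)
    _ = (∑ i ∈ s, a i) ^ p := by
        rw [← Finset.sum_mul, ← Real.rpow_one_add' hS hp', add_sub_cancel]

lemma Real.holderConjugate_of_one_div_add_one_div {p p' : ℝ} (hp : 1 ≤ p) (hp' : p' ≠ 0)
    (h : 1 / p + 1 / p' = 1) : p'.HolderConjugate p := by
  rw [one_div, one_div] at h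
  have hp'inv : 0 < p'⁻¹ := lt_of_le_of_ne (by linarith [inv_le_one_of_one_le₀ hp])
    (inv_ne_zero hp').symm
  refine Real.holderConjugate_iff.2 ⟨?_, by linarith⟩
  rw [← inv_inv p']
  exact one_lt_inv_iff₀.2 ⟨hp'inv, by linarith [inv_pos.2 (zero_lt_one.trans_le hp)]⟩

variable {Ω : Type} [MeasurableSpace Ω] {μ : Measure Ω}

lemma MeasureTheory.AEEqFun.coeFn_finset_sum {ι : Type*} (s : Finset ι) (z : ι → Ω →ₘ[μ] ℝ) :
    ⇑(∑ i ∈ s, z i) =ᵐ[μ] fun ω => ∑ i ∈ s, z i ω := by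
  classical
  induction s using Finset.induction with
  | empty => exact AEEqFun.coeFn_zero
  | insert i s hi ih =>
      filter_upwards [AEEqFun.coeFn_add (z i) (∑ j ∈ s, z j), ih] with ω h1 h2
      rw [Finset.sum_insert hi, h1, Pi.add_apply, h2, Finset.sum_insert hi]

section PSum

lemma coeFn_pSum (p : ℝ) {n : ℕ} (x : Fin n → Ω →ₘ[μ] ℝ) :
    ⇑(pSum p x) =ᵐ[μ] fun ω => (∑ k, |x k ω| ^ p) ^ p⁻¹ :=
  AEEqFun.coeFn_mk _ _

lemma coeFn_pSum_smul (p : ℝ) {n : ℕ} (c : Fin n → ℝ) (x : Fin n → Ω →ₘ[μ] ℝ) :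
    ⇑(pSum p fun k => c k • x k) =ᵐ[μ] fun ω => (∑ k, |c k * x k ω| ^ p) ^ p⁻¹ := by
  have hsmul : ∀ᵐ ω ∂μ, ∀ k, (c k • x k) ω = c k * x k ω :=
    ae_all_iff.2 fun k => AEEqFun.coeFn_smul (c k) (x k)
  filter_upwards [coeFn_pSum p fun k => c k • x k, hsmul] with ω hω hsmul
  simp only [hω, hsmul]

lemma pSum_fin_zero (p : ℝ) (x : Fin 0 → Ω →ₘ[μ] ℝ) :
    pSum p x = AEEqFun.const Ω ((0 : ℝ) ^ p⁻¹) :=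
  AEEqFun.mk_eq_mk.2 (Eventually.of_forall fun ω => by simp)

lemma abs_pSum_le_sum_abs {p : ℝ} (hp : 1 ≤ p) {n : ℕ} (x : Fin n → Ω →ₘ[μ] ℝ) :
    ∀ᵐ ω ∂μ, |pSum p x ω| ≤ ∑ k, |x k ω| := by
  filter_upwards [coeFn_pSum p x] with ω hω
  rw [hω, abs_of_nonneg (by positivity)]
  exact rpow_inv_sum_rpow_le_sum _ hp fun k _ => abs_nonneg _

lemma abs_pSum_smul_le_pSum_one {p : ℝ} (hp : 1 ≤ p) {n : ℕ} {c : Fin n → ℝ}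
    (hc : ∀ k, |c k| ≤ 1) (x : Fin n → Ω →ₘ[μ] ℝ) :
    ∀ᵐ ω ∂μ, |(pSum p fun k => c k • x k) ω| ≤ |pSum 1 x ω| := by
  filter_upwards [abs_pSum_le_sum_abs hp fun k => c k • x k, coeFn_pSum 1 x,
    ae_all_iff.2 fun k => AEEqFun.coeFn_smul (c k) (x k)] with ω hle hone hsmul
  rw [hone]
  simp only [Real.rpow_one, inv_one]
  refine hle.trans ((Finset.sum_le_sum fun k _ => ?_).trans (le_abs_self _))
  rw [hsmul k, Pi.smul_apply, smul_eq_mul, abs_mul]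
  exact mul_le_of_le_one_left (abs_nonneg _) (hc k)

end PSum

lemma MeasureTheory.AEEqFun.abs_le_abs_of_ae {f g : Ω →ₘ[μ] ℝ}
    (h : ∀ᵐ ω ∂μ, |f ω| ≤ |g ω|) : |f| ≤ |g| := by
  rw [← AEEqFun.coeFn_le]
  filter_upwards [AEEqFun.coeFn_abs f, AEEqFun.coeFn_abs g, h] with ω hf hg h
  rwa [hf, hg]

lemma MeasureTheory.AEEqFun.ae_abs_abs_le (f : Ω →ₘ[μ] ℝ) : ∀ᵐ ω ∂μ, |(|f|) ω| ≤ |f ω| := by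
  filter_upwards [AEEqFun.coeFn_abs f] with ω h
  rw [h, abs_abs]

namespace BFL

variable (X : BFL Ω μ)

lemma nrm_zero : X.nrm 0 = 0 := by
  simpa using X.nrm_smul 0 0 X.zero_mem

lemma mem_of_ae_abs_le {f g : Ω →ₘ[μ] ℝ} (hg : X.mem g) (h : ∀ᵐ ω ∂μ, |f ω| ≤ |g ω|) :
    X.mem f :=
  X.ideal f g hg (AEEqFun.abs_le_abs_of_ae h)

lemma nrm_le_of_ae_abs_le {f g : Ω →ₘ[μ] ℝ} (hg : X.mem g) (h : ∀ᵐ ω ∂μ, |f ω| ≤ |g ω|) :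
    X.nrm f ≤ X.nrm g :=
  X.nrm_mono f g hg (AEEqFun.abs_le_abs_of_ae h)

lemma abs_mem {f : Ω →ₘ[μ] ℝ} (hf : X.mem f) : X.mem |f| :=
  X.mem_of_ae_abs_le hf (AEEqFun.ae_abs_abs_le f)

lemma nrm_abs_le {f : Ω →ₘ[μ] ℝ} (hf : X.mem f) : X.nrm |f| ≤ X.nrm f :=
  X.nrm_le_of_ae_abs_le hf (AEEqFun.ae_abs_abs_le f)

lemma sub_mem {f g : Ω →ₘ[μ] ℝ} (hf : X.mem f) (hg : X.mem g) : X.mem (f - g) := by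
  simpa [sub_eq_add_neg] using X.add_mem f _ hf (X.smul_mem (-1) g hg)

lemma nrm_sub_comm {f g : Ω →ₘ[μ] ℝ} (hf : X.mem f) (hg : X.mem g) :
    X.nrm (f - g) = X.nrm (g - f) := by
  simpa using (X.nrm_smul (-1) (f - g) (X.sub_mem hf hg)).symm

lemma finset_sum_mem {ι : Type*} (s : Finset ι) {z : ι → Ω →ₘ[μ] ℝ} (hz : ∀ i, X.mem (z i)) :
    X.mem (∑ i ∈ s, z i) := by
  classical
  induction s using Finset.induction with
  | empty => simpa using X.zero_mem
  | insert i s hi ih => rw [Finset.sum_insert hi]; exact X.add_mem _ _ (hz i) ih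

lemma nrm_finset_sum_le {ι : Type*} (s : Finset ι) {z : ι → Ω →ₘ[μ] ℝ}
    (hz : ∀ i, X.mem (z i)) : X.nrm (∑ i ∈ s, z i) ≤ ∑ i ∈ s, X.nrm (z i) := by
  classical
  induction s using Finset.induction with
  | empty => simp [X.nrm_zero]
  | insert i s hi ih =>
      rw [Finset.sum_insert hi, Finset.sum_insert hi]
      exact (X.nrm_triangle _ _ (hz i) (X.finset_sum_mem s hz)).trans (by linarith)

lemma pSum_mem {p : ℝ} (hp : 1 ≤ p) {n : ℕ} {x : Fin n → Ω →ₘ[μ] ℝ} (hx : ∀ k, X.mem (x k)) :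
    X.mem (pSum p x) := by
  refine X.mem_of_ae_abs_le (X.finset_sum_mem Finset.univ fun k => X.abs_mem (hx k)) ?_
  filter_upwards [abs_pSum_le_sum_abs hp x, AEEqFun.coeFn_finset_sum Finset.univ fun k => |x k|,
    ae_all_iff.2 fun k => AEEqFun.coeFn_abs (x k)] with ω hle hsum habs
  rw [hsum, Finset.sum_congr rfl fun k _ => habs k]
  exact hle.trans (le_abs_self _)

lemma ae_le_of_tendsto_nrm_sub {u : ℕ → Ω →ₘ[μ] ℝ} {a g : Ω →ₘ[μ] ℝ}
    (hmem : ∀ n, X.mem (u n - g)) (hlim : Tendsto (fun n => X.nrm (u n - g)) atTop (𝓝 0))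
    (hle : ∀ᶠ n in atTop, ∀ᵐ ω ∂μ, a ω ≤ u n ω) : ∀ᵐ ω ∂μ, a ω ≤ g ω := by
  set d : Ω →ₘ[μ] ℝ := AEEqFun.mk (fun ω => max (a ω - g ω) 0)
    ((a.measurable.sub g.measurable).max measurable_const).aestronglyMeasurable
  have hd : ⇑d =ᵐ[μ] fun ω => max (a ω - g ω) 0 := AEEqFun.coeFn_mk _ _
  have hd_le : ∀ n, (∀ᵐ ω ∂μ, a ω ≤ u n ω) → ∀ᵐ ω ∂μ, |d ω| ≤ |(u n - g) ω| := by
    intro n hn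
    filter_upwards [hd, hn, AEEqFun.coeFn_sub (u n) g] with ω hd hn hsub
    rw [hd, hsub, Pi.sub_apply, abs_of_nonneg (le_max_right _ _)]
    exact max_le ((sub_le_sub_right hn _).trans (le_abs_self _)) (abs_nonneg _)
  obtain ⟨n, hn⟩ := hle.exists
  have hd_zero : d = 0 := by
    refine X.nrm_eq_zero d (X.mem_of_ae_abs_le (hmem n) (hd_le n hn))
      (le_antisymm ?_ (X.nrm_nonneg d))
    exact ge_of_tendsto hlim (hle.mono fun n hn => X.nrm_le_of_ae_abs_le (hmem n) (hd_le n hn))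
  filter_upwards [hd, hd_zero ▸ AEEqFun.coeFn_zero (β := ℝ)] with ω hd h0
  rw [h0, Pi.zero_apply] at hd
  linarith [le_max_left (a ω - g ω) 0]

/-- `g` is the sum of the series `∑ 2⁻ʲ |f j|`, which converges because `X` is complete. -/
lemma exists_mem_ae_geometric_le {f : ℕ → Ω →ₘ[μ] ℝ} (hf : ∀ j, X.mem (f j))
    (hnrm : ∀ j, X.nrm (f j) ≤ 1) :
    ∃ g, X.mem g ∧ ∀ j, ∀ᵐ ω ∂μ, 2⁻¹ ^ j * |f j ω| ≤ g ω := by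
  set z : ℕ → Ω →ₘ[μ] ℝ := fun j => (2⁻¹ : ℝ) ^ j • |f j|
  have hz : ∀ j, X.mem (z j) := fun j => X.smul_mem _ _ (X.abs_mem (hf j))
  have hz_nrm : ∀ j, X.nrm (z j) ≤ 2⁻¹ ^ j := fun j => by
    rw [X.nrm_smul _ _ (X.abs_mem (hf j)), abs_of_nonneg (by positivity)]
    exact mul_le_of_le_one_right (by positivity) ((X.nrm_abs_le (hf j)).trans (hnrm j))
  have hz_fn : ∀ᵐ ω ∂μ, ∀ j, z j ω = 2⁻¹ ^ j * |f j ω| := ae_all_iff.2 fun j => by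
    filter_upwards [AEEqFun.coeFn_smul ((2⁻¹ : ℝ) ^ j) |f j|, AEEqFun.coeFn_abs (f j)]
      with ω hs ha
    rw [hs, Pi.smul_apply, ha, smul_eq_mul]
  set S : ℕ → Ω →ₘ[μ] ℝ := fun m => ∑ j ∈ Finset.range m, z j
  have hS : ∀ m, X.mem (S m) := fun m => X.finset_sum_mem _ hz
  have hS_sub : ∀ k m, k ≤ m → X.nrm (S m - S k) ≤ 2 * 2⁻¹ ^ k := fun k m hkm => by
    rw [← Finset.sum_Ico_eq_sub _ hkm]
    refine (X.nrm_finset_sum_le _ hz).trans ((Finset.sum_le_sum fun j _ => hz_nrm j).trans ?_)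
    refine (geom_sum_Ico_le_of_lt_one (by norm_num) (by norm_num)).trans (le_of_eq ?_)
    ring
  have hcauchy : ∀ ε : ℝ, 0 < ε → ∃ N, ∀ m ≥ N, ∀ k ≥ N, X.nrm (S m - S k) < ε := by
    intro ε hε
    obtain ⟨N, hN⟩ := exists_pow_lt_of_lt_one (half_pos hε) (by norm_num : (2⁻¹ : ℝ) < 1)
    have hbound : ∀ k ≥ N, 2 * (2⁻¹ : ℝ) ^ k < ε := fun k hk => by
      linarith [pow_le_pow_of_le_one (by norm_num : (0 : ℝ) ≤ 2⁻¹) (by norm_num) hk]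
    refine ⟨N, fun m hm k hk => ?_⟩
    rcases le_total k m with hkm | hmk
    · exact (hS_sub k m hkm).trans_lt (hbound k hk)
    · rw [X.nrm_sub_comm (hS m) (hS k)]
      exact (hS_sub m k hmk).trans_lt (hbound m hm)
  obtain ⟨g, hg, hlim⟩ := X.complete S hS hcauchy
  refine ⟨g, hg, fun j => ?_⟩
  have hzS : ∀ᶠ m in atTop, ∀ᵐ ω ∂μ, z j ω ≤ S m ω := by
    filter_upwards [eventually_gt_atTop j] with m hjm
    filter_upwards [AEEqFun.coeFn_finset_sum (Finset.range m) z, hz_fn] with ω hsum hz_fn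
    rw [hsum]
    exact Finset.single_le_sum (f := fun i => z i ω) (fun i _ => by rw [hz_fn i]; positivity)
      (Finset.mem_range.2 hjm)
  filter_upwards [X.ae_le_of_tendsto_nrm_sub (fun m => X.sub_mem (hS m) hg) hlim hzS, hz_fn]
    with ω hle hz_fn
  rwa [← hz_fn j]

end BFL

section Koethe

variable {mem : (Ω →ₘ[μ] ℝ) → Prop} {Y : BFL Ω μ} {h : Ω →ₘ[μ] ℝ}

lemma kMem.integrable_mul (hh : kMem mem h) {f : Ω →ₘ[μ] ℝ} (hf : mem f) :
    Integrable (fun ω => f ω * h ω) μ := by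
  refine ⟨(f.measurable.mul h.measurable).aestronglyMeasurable, ?_⟩
  simpa only [HasFiniteIntegral, Real.enorm_eq_ofReal_abs] using hh f hf

lemma kMem.mono (hh : kMem mem h) {g : Ω →ₘ[μ] ℝ} (hg : ∀ᵐ ω ∂μ, |g ω| ≤ |h ω|) :
    kMem mem g := fun f hf =>
  lt_of_le_of_lt (lintegral_mono_ae (by
    filter_upwards [hg] with ω hω
    rw [abs_mul, abs_mul]
    exact ENNReal.ofReal_le_ofReal (mul_le_mul_of_nonneg_left hω (abs_nonneg _)))) (hh f hf)

lemma kMem.smul (hh : kMem Y.mem h) (c : ℝ) : kMem Y.mem (c • h) := fun f hf => by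
  have hcf : ∀ᵐ ω ∂μ, ENNReal.ofReal |f ω * (c • h) ω| = ENNReal.ofReal |(c • f) ω * h ω| := by
    filter_upwards [AEEqFun.coeFn_smul c h, AEEqFun.coeFn_smul c f] with ω hh hf
    rw [hh, hf, Pi.smul_apply, Pi.smul_apply, smul_eq_mul, smul_eq_mul, mul_left_comm, mul_assoc]
  rw [lintegral_congr_ae hcf]
  exact hh _ (Y.smul_mem c f hf)

lemma kMem_pSum {p : ℝ} (hp : 1 ≤ p) {n : ℕ} {y : Fin n → Ω →ₘ[μ] ℝ}
    (hy : ∀ k, kMem mem (y k)) : kMem mem (pSum p y) := fun f hf => by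
  have hle : ∀ᵐ ω ∂μ, ENNReal.ofReal |f ω * pSum p y ω| ≤ ∑ k, ENNReal.ofReal |f ω * y k ω| := by
    filter_upwards [abs_pSum_le_sum_abs hp y] with ω hω
    rw [← ENNReal.ofReal_sum_of_nonneg fun k _ => abs_nonneg _, abs_mul]
    refine ENNReal.ofReal_le_ofReal ((mul_le_mul_of_nonneg_left hω (abs_nonneg _)).trans ?_)
    simp only [Finset.mul_sum, abs_mul, le_refl]
  refine (lintegral_mono_ae hle).trans_lt ?_
  rw [lintegral_finsetSum' (f := fun k ω => ENNReal.ofReal |f ω * y k ω|) _ fun k _ =>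
    (f.measurable.mul (y k).measurable).abs.ennreal_ofReal.aemeasurable]
  exact ENNReal.sum_lt_top.2 fun k _ => hy k f hf

/-- Without this bound the real supremum `kNrm Y.mem Y.nrm h` would be the junk value `0`.
If it failed, pick `‖f j‖ ≤ 1` with `∫ |f j h| > 4 ^ j`; an element of `Y` dominating every
`2⁻ʲ |f j|` would then have `∫ |g h| ≥ 2 ^ j` for all `j`. -/
lemma kMem.bddAbove_integral (hh : kMem Y.mem h) :
    BddAbove (Set.range fun f : {f : Ω →ₘ[μ] ℝ // Y.mem f ∧ Y.nrm f ≤ 1} =>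
      ∫ ω, |f.1 ω * h ω| ∂μ) := by
  by_contra hunb
  have hbig : ∀ j : ℕ, ∃ f : {f : Ω →ₘ[μ] ℝ // Y.mem f ∧ Y.nrm f ≤ 1},
      (4 : ℝ) ^ j < ∫ ω, |f.1 ω * h ω| ∂μ := fun j => by
    obtain ⟨_, ⟨f, rfl⟩, hf⟩ := not_bddAbove_iff.1 hunb (4 ^ j)
    exact ⟨f, hf⟩
  choose f hf using hbig
  obtain ⟨g, hg, hfg⟩ := Y.exists_mem_ae_geometric_le (fun j => (f j).2.1) (fun j => (f j).2.2)
  obtain ⟨j, hj⟩ := pow_unbounded_of_one_lt (∫ ω, |g ω * h ω| ∂μ) one_lt_two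
  have hhump : (2 : ℝ) ^ j ≤ ∫ ω, |g ω * h ω| ∂μ :=
    calc (2 : ℝ) ^ j = 2⁻¹ ^ j * 4 ^ j := by rw [← mul_pow]; norm_num
      _ ≤ 2⁻¹ ^ j * ∫ ω, |(f j).1 ω * h ω| ∂μ := by gcongr; exact (hf j).le
      _ = ∫ ω, 2⁻¹ ^ j * |(f j).1 ω * h ω| ∂μ := (integral_const_mul _ _).symm
      _ ≤ ∫ ω, |g ω * h ω| ∂μ := by
        refine integral_mono_ae ((hh.integrable_mul (f j).2.1).abs.const_mul _)
          (hh.integrable_mul hg).abs ?_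
        filter_upwards [hfg j] with ω hω
        rw [abs_mul, abs_mul, ← mul_assoc]
        exact mul_le_mul_of_nonneg_right (hω.trans (le_abs_self _)) (abs_nonneg _)
  linarith

lemma kNrm_nonneg (mem : (Ω →ₘ[μ] ℝ) → Prop) (nrm : (Ω →ₘ[μ] ℝ) → ℝ) (h : Ω →ₘ[μ] ℝ) :
    0 ≤ kNrm mem nrm h :=
  Real.iSup_nonneg fun _ => integral_nonneg fun _ => abs_nonneg _

lemma integral_abs_mul_le_nrm_mul_kNrm (hh : kMem Y.mem h) {f : Ω →ₘ[μ] ℝ} (hf : Y.mem f) :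
    ∫ ω, |f ω * h ω| ∂μ ≤ Y.nrm f * kNrm Y.mem Y.nrm h := by
  rcases (Y.nrm_nonneg f).eq_or_lt with hf0 | hf0
  · have hf_zero : ⇑f =ᵐ[μ] 0 := Y.nrm_eq_zero f hf hf0.symm ▸ AEEqFun.coeFn_zero
    rw [← hf0, zero_mul, integral_eq_zero_of_ae]
    filter_upwards [hf_zero] with ω hω
    simp [hω]
  · set f₀ := (Y.nrm f)⁻¹ • f
    have hf₀ : Y.mem f₀ ∧ Y.nrm f₀ ≤ 1 := ⟨Y.smul_mem _ f hf, by
      rw [Y.nrm_smul _ f hf, abs_inv, abs_of_pos hf0, inv_mul_cancel₀ hf0.ne']⟩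
    have hscale : ∫ ω, |f₀ ω * h ω| ∂μ = (Y.nrm f)⁻¹ * ∫ ω, |f ω * h ω| ∂μ := by
      rw [← integral_const_mul]
      refine integral_congr_ae ?_
      filter_upwards [AEEqFun.coeFn_smul (Y.nrm f)⁻¹ f] with ω hω
      rw [hω, Pi.smul_apply, smul_eq_mul, mul_assoc, abs_mul, abs_of_pos (inv_pos.2 hf0)]
    rw [← inv_mul_le_iff₀ hf0, ← hscale]
    exact le_ciSup hh.bddAbove_integral ⟨f₀, hf₀⟩

lemma kNrm_mono (hh : kMem Y.mem h) {g : Ω →ₘ[μ] ℝ} (hg : ∀ᵐ ω ∂μ, |g ω| ≤ |h ω|) :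
    kNrm Y.mem Y.nrm g ≤ kNrm Y.mem Y.nrm h :=
  ciSup_mono hh.bddAbove_integral fun f => integral_mono_ae
    ((hh.mono hg).integrable_mul f.2.1).abs (hh.integrable_mul f.2.1).abs (by
      filter_upwards [hg] with ω hω
      rw [abs_mul, abs_mul]
      exact mul_le_mul_of_nonneg_left hω (abs_nonneg _))

end Koethe

section StrongBall

lemma abs_le_one_of_mem_strongBall {p q : ℝ} (hp : 0 < p) (hpq : p < q) {n : ℕ}
    {β : Fin n → ℝ} (hβ : β ∈ strongBall p q n) (k : Fin n) : |β k| ≤ 1 := by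
  rw [strongBall, Set.mem_ofPred_eq, if_neg hpq.ne] at hβ
  have hr : 0 < (1 / p - 1 / q)⁻¹ := inv_pos.2 (sub_pos.2 (one_div_lt_one_div_of_lt hp hpq))
  by_contra! hk
  have := Finset.single_le_sum (f := fun j => |β j| ^ (1 / p - 1 / q)⁻¹)
    (fun j _ => Real.rpow_nonneg (abs_nonneg _) _) (Finset.mem_univ k)
  linarith [Real.one_lt_rpow hk hr]

lemma exists_mem_strongBall_forall_ne_zero {p q : ℝ} (hp : 0 < p) (hpq : p < q) (n : ℕ) :
    ∃ α ∈ strongBall p q n, ∀ k, α k ≠ 0 := by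
  set d := 1 / p - 1 / q
  have hd : 0 < d := sub_pos.2 (one_div_lt_one_div_of_lt hp hpq)
  have hc : (0 : ℝ) < ((n : ℝ) + 1)⁻¹ ^ d := by positivity
  -- `|α k| ^ (1/d) = 1/(n+1)`, so the `ℓ_{1/d}` sum is `n/(n+1)`
  refine ⟨fun _ => ((n : ℝ) + 1)⁻¹ ^ d, ?_, fun _ => hc.ne'⟩
  rw [strongBall, Set.mem_ofPred_eq, if_neg hpq.ne, Finset.sum_const, Finset.card_univ,
    Fintype.card_fin, nsmul_eq_mul, abs_of_pos hc, Real.rpow_rpow_inv (by positivity) hd.ne',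
    ← div_eq_mul_inv, div_le_one (by positivity)]
  linarith

lemma bddAbove_kNrm_strongBall {Y : BFL Ω μ} {p q : ℝ} (hp : 1 ≤ p) (hpq : p < q) {n : ℕ}
    {y : Fin n → Ω →ₘ[μ] ℝ} (hy : ∀ k, kMem Y.mem (y k)) :
    BddAbove (Set.range fun β : strongBall p q n =>
      kNrm Y.mem Y.nrm (pSum p fun k => β.1 k • y k)) := by
  refine ⟨kNrm Y.mem Y.nrm (pSum 1 y), ?_⟩
  rintro _ ⟨β, rfl⟩
  exact kNrm_mono (kMem_pSum le_rfl hy) (abs_pSum_smul_le_pSum_one hp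
    (abs_le_one_of_mem_strongBall (by linarith) hpq β.2) y)

end StrongBall

lemma abs_sum_integral_mul_le_nrm_mul_kNrm {Y : BFL Ω μ} {p p' : ℝ}
    (hpp' : p'.HolderConjugate p) {n : ℕ} {z y : Fin n → Ω →ₘ[μ] ℝ} {c : Fin n → ℝ}
    (hz : ∀ k, Y.mem (z k)) (hy : ∀ k, kMem Y.mem (y k)) (hc : ∀ k, c k ≠ 0) :
    |∑ k, ∫ ω, z k ω * y k ω ∂μ| ≤
      Y.nrm (pSum p' fun k => (c k)⁻¹ • z k) * kNrm Y.mem Y.nrm (pSum p fun k => c k • y k) := by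
  set F := pSum p' fun k => (c k)⁻¹ • z k
  set G := pSum p fun k => c k • y k
  have hF : Y.mem F := Y.pSum_mem hpp'.lt.le fun k => Y.smul_mem _ _ (hz k)
  have hG : kMem Y.mem G := kMem_pSum hpp'.symm.lt.le fun k => (hy k).smul (c k)
  have hzy : ∀ k, Integrable (fun ω => |z k ω * y k ω|) μ := fun k =>
    ((hy k).integrable_mul (hz k)).abs
  have holder : ∀ᵐ ω ∂μ, ∑ k, |z k ω * y k ω| ≤ |F ω * G ω| := by
    filter_upwards [coeFn_pSum_smul p' (fun k => (c k)⁻¹) z, coeFn_pSum_smul p c y]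
      with ω hF hG
    rw [hF, hG]
    refine le_trans (le_of_eq (Finset.sum_congr rfl fun k _ => ?_))
      ((Real.inner_le_Lp_mul_Lq_of_nonneg Finset.univ hpp' (fun k _ => abs_nonneg _)
        (fun k _ => abs_nonneg _)).trans (by simp only [one_div]; exact le_abs_self _))
    rw [← abs_mul, mul_mul_mul_comm, inv_mul_cancel₀ (hc k), one_mul]
  calc |∑ k, ∫ ω, z k ω * y k ω ∂μ| ≤ ∑ k, ∫ ω, |z k ω * y k ω| ∂μ :=
        (Finset.abs_sum_le_sum_abs _ _).trans
          (Finset.sum_le_sum fun k _ => abs_integral_le_integral_abs)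
    _ = ∫ ω, ∑ k, |z k ω * y k ω| ∂μ := (integral_finsetSum _ fun k _ => hzy k).symm
    _ ≤ ∫ ω, |F ω * G ω| ∂μ :=
        integral_mono_ae (integrable_finsetSum _ fun k _ => hzy k)
          (hG.integrable_mul hF).abs holder
    _ ≤ Y.nrm F * kNrm Y.mem Y.nrm G := integral_abs_mul_le_nrm_mul_kNrm hG hF

theorem statement8_general {Ω₁ Ω₂ : Type} [MeasurableSpace Ω₁] [MeasurableSpace Ω₂]
    (μ₁ : Measure Ω₁) (μ₂ : Measure Ω₂)
    (X : BFL Ω₁ μ₁) (Y : BFL Ω₂ μ₂)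
    (p₁ p₂ q q' p₂' : ℝ)
    (hp₁ : 1 ≤ p₁) (hp₂ : 1 ≤ p₂) (hp₂q : p₂ < q')
    (hp₂conj : 1 / p₂ + 1 / p₂' = 1)
    (hYconc : ∃ C, Y.pConcave p₂' C)
    (T : (Ω₁ →ₘ[μ₁] ℝ) → (Ω₂ →ₘ[μ₂] ℝ)) (hT : IsBddOp X Y T)
    (C : ℝ) (hC : 0 < C)
    (hdom : ∀ (n : ℕ) (x : Fin n → (Ω₁ →ₘ[μ₁] ℝ)), (∀ k, X.mem (x k)) →
      (⨅ α : {α : Fin n → ℝ // α ∈ strongBall p₂ q' n ∧ ∀ k, α k ≠ 0},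
        Y.nrm (pSum p₂' fun k => (α.1 k)⁻¹ • T (x k))) ≤
      C * strongSup X.nrm p₁ q x) :
    ∃ C' > 0, StrongPair X Y p₁ q p₂ q' T C' := by
  have hadmissible : ∀ n, Nonempty {α : Fin n → ℝ // α ∈ strongBall p₂ q' n ∧ ∀ k, α k ≠ 0} :=
    fun n => have ⟨α, hα, hα0⟩ := exists_mem_strongBall_forall_ne_zero (by linarith) hp₂q n
      ⟨⟨α, hα, hα0⟩⟩
  -- `p₂ = 1` forces the junk value `p₂' = 0`; then `pSum 0` is the constant `1`, whose norm is
  -- positive by `0`-concavity of `Y` but zero by the domination hypothesis at `n = 0`.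
  have hp₂' : p₂' ≠ 0 := by
    rintro rfl
    obtain ⟨C₂, hC₂⟩ := hYconc
    have hconc := hC₂ 0 finZeroElim finZeroElim
    have hdom₀ := hdom 0 finZeroElim finZeroElim
    have hp₁0 : p₁⁻¹ ≠ 0 := inv_ne_zero (by positivity)
    have hconst : AEEqFun.const Ω₁ (0 : ℝ) = (0 : Ω₁ →ₘ[μ₁] ℝ) := rfl
    simp only [pSum_fin_zero, strongSup, Real.zero_rpow hp₁0, hconst, X.nrm_zero,
      Real.iSup_const_zero, mul_zero, ciInf_const] at hconc hdom₀
    rw [le_antisymm hdom₀ (Y.nrm_nonneg _)] at hconc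
    norm_num at hconc
  have hconj : p₂'.HolderConjugate p₂ :=
    Real.holderConjugate_of_one_div_add_one_div hp₂ hp₂' hp₂conj
  refine ⟨C, hC, fun n x y hx hy => ?_⟩
  set S₂ := strongSup (kNrm Y.mem Y.nrm) p₂ q' y
  have hS₂ : 0 ≤ S₂ := Real.iSup_nonneg fun _ => kNrm_nonneg _ _ _
  calc |∑ k, ∫ ω, T (x k) ω * y k ω ∂μ₂|
      ≤ ⨅ α : {α : Fin n → ℝ // α ∈ strongBall p₂ q' n ∧ ∀ k, α k ≠ 0},
          Y.nrm (pSum p₂' fun k => (α.1 k)⁻¹ • T (x k)) * S₂ :=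
        le_ciInf fun α => (abs_sum_integral_mul_le_nrm_mul_kNrm hconj (fun k => hT.1 _ (hx k))
          hy α.2.2).trans (mul_le_mul_of_nonneg_left
            (le_ciSup (bddAbove_kNrm_strongBall hp₂ hp₂q hy) ⟨α.1, α.2.1⟩) (Y.nrm_nonneg _))
    _ = (⨅ α : {α : Fin n → ℝ // α ∈ strongBall p₂ q' n ∧ ∀ k, α k ≠ 0},
          Y.nrm (pSum p₂' fun k => (α.1 k)⁻¹ • T (x k))) * S₂ :=
        (Real.iInf_mul_of_nonneg hS₂ _).symm
    _ ≤ C * strongSup X.nrm p₁ q x * S₂ := mul_le_mul_of_nonneg_right (hdom n x hx) hS₂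
    _ = C * (strongSup X.nrm p₁ q x * S₂) := mul_assoc _ _ _

/-- Corollary `otrafor`: let `1 ≤ p₁ < q`, `1 ≤ p₂ < q'` with
`1/q + 1/q' = 1`, `1/p₂ + 1/p₂' = 1`, `X` a `p₁`-convex Banach function lattice and `Y` an
order continuous `p₂'`-concave Banach function lattice with the Fatou property. If
`inf_{α ∈ B_{r₂}, αₖ ≠ 0} ‖(∑ |T xₖ / αₖ|^{p₂'})^{1/p₂'}‖_Y ≤
  C sup_{β ∈ B_{r₁}} ‖(∑ |βₖ xₖ|^{p₁})^{1/p₁}‖_X`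
for all finite sequences, then `T` is `(p₁,p₂)`-strongly `(q,q')`-concave. -/
theorem statement8 {Ω₁ Ω₂ : Type} [MeasurableSpace Ω₁] [MeasurableSpace Ω₂]
    (μ₁ : Measure Ω₁) (μ₂ : Measure Ω₂) [SigmaFinite μ₁] [SigmaFinite μ₂]
    (X : BFL Ω₁ μ₁) (Y : BFL Ω₂ μ₂)
    (p₁ p₂ q q' p₂' : ℝ)
    (hp₁ : 1 ≤ p₁) (hp₁q : p₁ < q) (hp₂ : 1 ≤ p₂) (hp₂q : p₂ < q')
    (hq : 1 / q + 1 / q' = 1) (hp₂conj : 1 / p₂ + 1 / p₂' = 1)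
    (hX : ∃ C, X.pConvex p₁ C) (hYconc : ∃ C, Y.pConcave p₂' C)
    (hYoc : Y.OrderCont) (hYF : Y.Fatou)
    (T : (Ω₁ →ₘ[μ₁] ℝ) → (Ω₂ →ₘ[μ₂] ℝ)) (hT : IsBddOp X Y T)
    (C : ℝ) (hC : 0 < C)
    (hdom : ∀ (n : ℕ) (x : Fin n → (Ω₁ →ₘ[μ₁] ℝ)), (∀ k, X.mem (x k)) →
      (⨅ α : {α : Fin n → ℝ // α ∈ strongBall p₂ q' n ∧ ∀ k, α k ≠ 0},
        Y.nrm (pSum p₂' fun k => (α.1 k)⁻¹ • T (x k))) ≤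
      C * strongSup X.nrm p₁ q x) :
    ∃ C' > 0, StrongPair X Y p₁ q p₂ q' T C' :=
  statement8_general μ₁ μ₂ X Y p₁ p₂ q q' p₂' hp₁ hp₂ hp₂q hp₂conj hYconc T hT C hC hdom
end
end
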